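/- Let α : ℕ → ℕ satisfy log(n) ≤ α(n) < n for all n, and write u_n = n/α(n) (so u_n > 1 and ξ(u_n) is defined). Then, as n → ∞: (i) x_{n,α}(1) = exp( ξ(u_n)/α(n) ) + O( log(u_n + 1)/α(n)² ); (ii) ξ(u_n) = log(u_n) + log(log(u_n + 2)) + O( log(log(u_n + 2)) / log(u_n + 2) ); (iii) α(n)·log(x_{n,α}(1)) = ξ(u_n) + O( log(u_n + 1)/α(n) ). -/

import Mathlib

/-!
Write `h(t) = (exp t - 1) / t` (`expSlope`), so that `ξ(u)` is the positive root of `h ξ = u`.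
With `m = α(n)` and `t = m log x`, the closed form of the geometric sum together with
`log x ≤ x - 1 ≤ x log x` gives `h t ≤ n / m ≤ x h t`. Since
`h t = exp (t / 2) * sinh (t / 2) / (t / 2)` and `sinh s / s` increases (`sinh` is convex on
`[0, ∞)`), `h b ≥ exp ((b - a) / 2) h a` for `0 < a ≤ b`; comparing with `h ξ = n / m` yields
`t ≤ ξ ≤ t + 2 log x`, hence `ξ - t ≤ 2ξ / m`, which is (iii), and (i) follows since
`ξ / m` stays bounded. For (ii), `ξ = log u + log (ξ + 1/u)`, and the crude bounds
`log u ≤ ξ ≤ log (u + 2) + log log (u + 2) + 1` pin `ξ + 1/u` to `log (u + 2)` up to a relative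
error `O(log log (u + 2) / log (u + 2))`.
-/

open Real Finset Filter Asymptotics

noncomputable def expSlope (t : ℝ) : ℝ := (exp t - 1) / t

theorem convexOn_sinh_Ici : ConvexOn ℝ (Set.Ici 0) sinh := by
  refine MonotoneOn.convexOn_of_deriv (convex_Ici 0) continuous_sinh.continuousOn
    differentiable_sinh.differentiableOn ?_
  rw [interior_Ici, Real.deriv_sinh]
  intro a ha b hb hab
  rw [cosh_le_cosh, abs_of_pos ha, abs_of_pos hb]
  exact hab

theorem sinh_div_self_le_sinh_div_self {a b : ℝ} (ha : 0 < a) (hab : a ≤ b) :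
    sinh a / a ≤ sinh b / b := by
  have hb := ha.trans_le hab
  simpa using convexOn_sinh_Ici.secant_mono (a := 0) Set.self_mem_Ici ha.le hb.le ha.ne' hb.ne' hab

theorem expSlope_eq_exp_half_mul (t : ℝ) :
    expSlope t = exp (t / 2) * (sinh (t / 2) / (t / 2)) := by
  have h : exp t = exp (t / 2) * exp (t / 2) := by rw [← exp_add, add_halves]
  rw [expSlope, sinh_eq, exp_neg, h]
  rcases eq_or_ne t 0 with rfl | ht
  · simp
  field_simp

theorem exp_half_sub_mul_expSlope_le {a b : ℝ} (ha : 0 < a) (hab : a ≤ b) :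
    exp ((b - a) / 2) * expSlope a ≤ expSlope b := by
  rw [expSlope_eq_exp_half_mul, expSlope_eq_exp_half_mul, ← mul_assoc, ← exp_add]
  rw [show (b - a) / 2 + a / 2 = b / 2 by ring]
  exact mul_le_mul_of_nonneg_left (sinh_div_self_le_sinh_div_self (by positivity) (by linarith))
    (exp_pos _).le

theorem one_lt_expSlope {t : ℝ} (ht : 0 < t) : 1 < expSlope t := by
  rw [expSlope, one_lt_div ht]
  linarith [add_one_lt_exp ht.ne']

theorem le_of_expSlope_le_expSlope {a b : ℝ} (hb : 0 < b) (h : expSlope a ≤ expSlope b) :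
    a ≤ b := by
  by_contra! hba
  have := exp_half_sub_mul_expSlope_le hb hba.le
  have : 1 < exp ((a - b) / 2) := one_lt_exp_iff.2 (by linarith)
  nlinarith [one_lt_expSlope hb]

theorem one_lt_log_three : 1 < log 3 := by
  rw [lt_log_iff_exp_lt (by norm_num)]
  linarith [exp_one_lt_d9]

theorem log_log_add_two_div_log_le {u : ℝ} (hu : 1 < u) :
    (log (log (u + 2)) + 2) / log (u + 2) ≤
      (1 + 2 / log (log 3)) * (log (log (u + 2)) / log (u + 2)) := by
  have hL3 : log 3 ≤ log (u + 2) := log_le_log (by norm_num) (by linarith)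
  have hll3 : 0 < log (log 3) := log_pos one_lt_log_three
  have hLL : log (log 3) ≤ log (log (u + 2)) := log_le_log (by linarith [one_lt_log_three]) hL3
  rw [← mul_div_assoc]
  refine div_le_div_of_nonneg_right ?_ (by linarith [one_lt_log_three])
  have : 2 ≤ 2 / log (log 3) * log (log (u + 2)) := by
    rw [div_mul_eq_mul_div, le_div_iff₀ hll3]
    linarith
  linarith

section ExpSlopeRoot

variable {u ξ : ℝ}

theorem pos_of_exp_eq_one_add_mul (hu : 1 < u) (hξ : ξ ≠ 0) (h : exp ξ = 1 + u * ξ) : 0 < ξ := by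
  by_contra! hξ'
  nlinarith [add_one_lt_exp hξ]

theorem expSlope_eq_of_exp_eq_one_add_mul (hξ : ξ ≠ 0) (h : exp ξ = 1 + u * ξ) :
    expSlope ξ = u := by
  rw [expSlope, h]
  field_simp
  ring

theorem log_le_of_expSlope_eq (hξ : 0 < ξ) (hu : expSlope ξ = u) : log u ≤ ξ := by
  have hu1 : 1 < u := hu ▸ one_lt_expSlope hξ
  have hlog : 0 < log u := log_pos hu1
  refine le_of_expSlope_le_expSlope hξ ?_
  rw [hu, expSlope, exp_log (by linarith), div_le_iff₀ hlog]
  have := one_sub_inv_le_log_of_pos (by linarith : 0 < u)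
  have : u * (1 - u⁻¹) = u - 1 := by field_simp
  nlinarith

theorem le_three_mul_log_of_expSlope_eq (hξ : 0 < ξ) (hu : expSlope ξ = u) :
    ξ ≤ 3 * log (u + 1) := by
  have hu1 : 1 < u := hu ▸ one_lt_expSlope hξ
  have hlog : 0 < log (u + 1) := log_pos (by linarith)
  refine le_of_expSlope_le_expSlope (by positivity) ?_
  have hcube : exp (3 * log (u + 1)) = (u + 1) ^ 3 := by
    rw [show 3 * log (u + 1) = log ((u + 1) ^ 3) by rw [log_pow]; norm_num,
      exp_log (by positivity)]
  rw [hu, expSlope, hcube, le_div_iff₀ (by positivity)]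
  have hlog_le : log (u + 1) ≤ u := by linarith [log_le_sub_one_of_pos (by linarith : 0 < u + 1)]
  nlinarith [mul_le_mul_of_nonneg_left hlog_le (by linarith : 0 ≤ 3 * u),
    pow_pos (by linarith : 0 < u) 3]

theorem le_log_add_log_log_add_one_of_expSlope_eq (hξ : 0 < ξ) (hu : expSlope ξ = u) :
    ξ ≤ log (u + 2) + log (log (u + 2)) + 1 := by
  have hu1 : 1 < u := hu ▸ one_lt_expSlope hξ
  set L := log (u + 2)
  have hL : 1 ≤ L := one_lt_log_three.le.trans (log_le_log (by norm_num) (by linarith))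
  have hLL : log L ≤ L - 1 := log_le_sub_one_of_pos (by linarith)
  have hLL0 : 0 ≤ log L := log_nonneg hL
  have he : 2 ≤ exp 1 := by linarith [add_one_le_exp 1]
  refine le_of_expSlope_le_expSlope (by positivity) ?_
  rw [hu, expSlope, exp_add, exp_add, exp_log (by linarith), exp_log (by linarith),
    le_div_iff₀ (by positivity)]
  nlinarith [mul_le_mul_of_nonneg_left he (by positivity : 0 ≤ (u + 2) * L)]

theorem eq_log_add_log_of_expSlope_eq (hξ : 0 < ξ) (hu : expSlope ξ = u) :
    ξ = log u + log (ξ + u⁻¹) := by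
  have hu0 : 0 < u := hu ▸ (zero_lt_one.trans (one_lt_expSlope hξ))
  rw [← log_mul hu0.ne' (by positivity), mul_add, mul_inv_cancel₀ hu0.ne', ← hu, expSlope,
    div_mul_cancel₀ _ hξ.ne', sub_add_cancel, log_exp]

theorem abs_sub_log_add_log_log_le_of_expSlope_eq (hξ : 0 < ξ) (hu : expSlope ξ = u) :
    |ξ - (log u + log (log (u + 2)))| ≤
      (1 + 2 / log (log 3)) * (log (log (u + 2)) / log (u + 2)) := by
  have hu1 : 1 < u := hu ▸ one_lt_expSlope hξ
  refine le_trans ?_ (log_log_add_two_div_log_le hu1)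
  have hu0 : 0 < u := by linarith
  set L := log (u + 2)
  set y := ξ + u⁻¹
  have hL : 1 ≤ L := one_lt_log_three.le.trans (log_le_log (by norm_num) (by linarith))
  have hLL0 : 0 ≤ log L := log_nonneg hL
  have hinv : u⁻¹ ≤ 1 := inv_le_one_of_one_le₀ hu1.le
  have hlogu : 1 - u⁻¹ ≤ log u := one_sub_inv_le_log_of_pos hu0
  have hξlog := log_le_of_expSlope_eq hξ hu
  have hy1 : 1 ≤ y := by linarith
  have hgap : L - log u ≤ 2 * u⁻¹ := by
    have := log_le_sub_one_of_pos (by positivity : 0 < (u + 2) * u⁻¹)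
    rw [log_mul (by linarith) (by positivity), log_inv] at this
    linarith [show (u + 2) * u⁻¹ - 1 = 2 * u⁻¹ by field_simp; ring]
  have hLu : L ≤ 2 * u := by linarith [log_le_sub_one_of_pos (by linarith : 0 < u + 2)]
  rw [show ξ - (log u + log L) = log (y / L) by
    rw [log_div (by positivity) (by positivity), eq_log_add_log_of_expSlope_eq hξ hu]; ring]
  refine abs_le.2 ⟨?_, ?_⟩
  · have hlow : -u⁻¹ ≤ log (y / L) := by
      refine le_trans ?_ (one_sub_inv_le_log_of_pos (by positivity))
      have : L / y ≤ 1 + u⁻¹ := by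
        rw [div_le_iff₀ (by positivity)]
        nlinarith [mul_le_mul_of_nonneg_left hy1 (inv_nonneg.2 hu0.le)]
      rw [inv_div]
      linarith
    have : u⁻¹ ≤ 2 / L := by
      rw [inv_le_comm₀ hu0 (by positivity), inv_div]
      linarith
    have : 2 / L ≤ (log L + 2) / L := div_le_div_of_nonneg_right (by linarith) (by positivity)
    linarith
  · refine (log_le_sub_one_of_pos (by positivity)).trans ?_
    rw [sub_le_iff_le_add, div_add_one (by positivity : L ≠ 0)]
    refine div_le_div_of_nonneg_right ?_ (by positivity)
    linarith [le_log_add_log_log_add_one_of_expSlope_eq hξ hu]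

end ExpSlopeRoot

theorem exp_sub_exp_le_exp_mul_sub (a b : ℝ) : exp a - exp b ≤ exp a * (a - b) := by
  have h : exp b = exp a * exp (b - a) := by rw [← exp_add, add_sub_cancel]
  nlinarith [mul_le_mul_of_nonneg_left (add_one_le_exp (b - a)) (exp_pos a).le]

section SaddlePoint
variable {m : ℕ} {x ξ : ℝ}

theorem sum_Icc_pow_eq (hx : x ≠ 1) :
    ∑ j ∈ Icc 1 m, x ^ j = x * (x ^ m - 1) / (x - 1) := by
  rw [← Ico_add_one_right_eq_Icc, geom_sum_Ico hx (by omega)]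
  ring

theorem mul_expSlope_mul_log (hx : 1 < x) (hm : m ≠ 0) :
    m * expSlope (m * log x) = (x ^ m - 1) / log x := by
  have := log_pos hx
  rw [expSlope, exp_nat_mul, exp_log (by linarith)]
  field_simp

theorem mul_expSlope_le_sum_Icc_pow (hx : 1 < x) (hm : m ≠ 0) :
    m * expSlope (m * log x) ≤ ∑ j ∈ Icc 1 m, x ^ j := by
  have hlog := log_pos hx
  have hpow : 0 < x ^ m - 1 := by linarith [one_lt_pow₀ hx hm]
  have : 1 - x⁻¹ ≤ log x := one_sub_inv_le_log_of_pos (by linarith)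
  have hx1 : x * (1 - x⁻¹) = x - 1 := by field_simp
  rw [mul_expSlope_mul_log hx hm, sum_Icc_pow_eq hx.ne', div_le_div_iff₀ hlog (by linarith)]
  nlinarith [mul_le_mul_of_nonneg_left this (by linarith : 0 ≤ x)]

theorem sum_Icc_pow_le_mul_expSlope (hx : 1 < x) (hm : m ≠ 0) :
    ∑ j ∈ Icc 1 m, x ^ j ≤ x * (m * expSlope (m * log x)) := by
  have hlog := log_pos hx
  have hpow : 0 < x ^ m - 1 := by linarith [one_lt_pow₀ hx hm]
  rw [mul_expSlope_mul_log hx hm, sum_Icc_pow_eq hx.ne', ← mul_div_assoc,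
    div_le_div_iff₀ (by linarith) hlog]
  exact mul_le_mul_of_nonneg_left (log_le_sub_one_of_pos (by linarith)) (by positivity)

theorem one_lt_of_lt_sum_Icc_pow (hx : 0 ≤ x) (h : (m : ℝ) < ∑ j ∈ Icc 1 m, x ^ j) : 1 < x := by
  by_contra! hx1
  have : ∑ j ∈ Icc 1 m, x ^ j ≤ ∑ j ∈ Icc 1 m, (1 : ℝ) :=
    sum_le_sum fun j _ => pow_le_one₀ hx hx1
  simp only [sum_const, Nat.card_Icc, add_tsub_cancel_right, nsmul_eq_mul, mul_one] at this
  linarith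

theorem mul_log_le_and_sub_le_of_sum_Icc_pow_eq (hx : 1 < x) (hm : m ≠ 0) (hξ : 0 < ξ)
    (hsum : ∑ j ∈ Icc 1 m, x ^ j = m * expSlope ξ) :
    m * log x ≤ ξ ∧ ξ - m * log x ≤ 2 * log x := by
  have hm0 : (0 : ℝ) < m := by positivity
  have ht : 0 < m * log x := mul_pos hm0 (log_pos hx)
  have hlow := mul_expSlope_le_sum_Icc_pow hx hm
  have hupp := sum_Icc_pow_le_mul_expSlope hx hm
  rw [hsum] at hlow hupp
  have htξ : m * log x ≤ ξ :=
    le_of_expSlope_le_expSlope hξ (le_of_mul_le_mul_left hlow hm0)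
  refine ⟨htξ, ?_⟩
  have key : exp ((ξ - m * log x) / 2) * expSlope (m * log x) ≤
      exp (log x) * expSlope (m * log x) := by
    rw [exp_log (by linarith)]
    exact (exp_half_sub_mul_expSlope_le ht htξ).trans
      (le_of_mul_le_mul_left (by linarith) hm0)
  have := exp_le_exp.1 (le_of_mul_le_mul_right key (by linarith [one_lt_expSlope ht]))
  linarith

theorem abs_mul_log_sub_le_of_sum_Icc_pow_eq (hx : 1 < x) (hm : m ≠ 0) (hξ : 0 < ξ)
    (hsum : ∑ j ∈ Icc 1 m, x ^ j = m * expSlope ξ) :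
    |m * log x - ξ| ≤ 2 * ξ / m := by
  obtain ⟨hle, hsub⟩ := mul_log_le_and_sub_le_of_sum_Icc_pow_eq hx hm hξ hsum
  have hm0 : (0 : ℝ) < m := by positivity
  rw [abs_of_nonpos (by linarith), le_div_iff₀ hm0]
  nlinarith

theorem abs_sub_exp_div_le_of_sum_Icc_pow_eq (hx : 1 < x) (hm : m ≠ 0) (hξ : 0 < ξ)
    (hsum : ∑ j ∈ Icc 1 m, x ^ j = m * expSlope ξ) :
    |x - exp (ξ / m)| ≤ exp (ξ / m) * (2 * ξ / m ^ 2) := by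
  obtain ⟨hle, hsub⟩ := mul_log_le_and_sub_le_of_sum_Icc_pow_eq hx hm hξ hsum
  have hm0 : (0 : ℝ) < m := by positivity
  have hx_eq : x = exp (m * log x / m) := by
    rw [mul_div_cancel_left₀ _ hm0.ne', exp_log (by linarith)]
  have hdiff : 0 ≤ exp (ξ / m) - x := by
    rw [sub_nonneg, hx_eq]
    exact exp_le_exp.2 (div_le_div_of_nonneg_right hle hm0.le)
  rw [abs_sub_comm, abs_of_nonneg hdiff]
  nth_rw 1 [hx_eq]
  refine (exp_sub_exp_le_exp_mul_sub _ _).trans (mul_le_mul_of_nonneg_left ?_ (exp_pos _).le)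
  rw [← sub_div, div_le_div_iff₀ hm0 (by positivity)]
  nlinarith

end SaddlePoint

theorem one_lt_div_of_log_le {n m : ℕ} (hn : 2 ≤ n) (hlog : log n ≤ m) (hmn : m < n) :
    1 < (n : ℝ) / m := by
  have : 0 < log n := log_pos (by exact_mod_cast hn)
  exact (one_lt_div (by linarith)).2 (by exact_mod_cast hmn)

theorem saddle_point_estimates {n m : ℕ} {x ξ : ℝ} (hn : 2 ≤ n) (hlog : log n ≤ m) (hmn : m < n)
    (hx : 0 < x) (hsum : ∑ j ∈ Icc 1 m, x ^ j = n) (hξ : ξ ≠ 0 ∧ exp ξ = 1 + (n / m : ℝ) * ξ) :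
    |x - exp (ξ / m)| ≤ 6 * exp 6 * (log (n / m + 1) / m ^ 2) ∧
    |ξ - (log (n / m) + log (log (n / m + 2)))| ≤
      (1 + 2 / log (log 3)) * (log (log (n / m + 2)) / log (n / m + 2)) ∧
    |m * log x - ξ| ≤ 6 * (log (n / m + 1) / m) := by
  have hu := one_lt_div_of_log_le hn hlog hmn
  have hξ0 := pos_of_exp_eq_one_add_mul hu hξ.1 hξ.2
  have hslope := expSlope_eq_of_exp_eq_one_add_mul hξ.1 hξ.2
  have hm0 : (0 : ℝ) < m := by linarith [log_pos (by exact_mod_cast hn : (1 : ℝ) < n)]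
  have hm : m ≠ 0 := by exact_mod_cast hm0.ne'
  have hsum' : ∑ j ∈ Icc 1 m, x ^ j = m * expSlope ξ := by
    rw [hsum, hslope, mul_div_cancel₀ _ hm0.ne']
  have hx1 : 1 < x := one_lt_of_lt_sum_Icc_pow hx.le (by rw [hsum]; exact_mod_cast hmn)
  have hξ_le := le_three_mul_log_of_expSlope_eq hξ0 hslope
  have hn2 : (2 : ℝ) ≤ n := by exact_mod_cast hn
  have hlog_u : log (n / m + 1) ≤ 2 * m := by
    have hu_le : (n : ℝ) / m ≤ n :=
      div_le_self (by positivity) (by exact_mod_cast Nat.one_le_iff_ne_zero.2 hm)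
    calc log (n / m + 1) ≤ log ((n : ℝ) ^ 2) := log_le_log (by positivity) (by nlinarith)
      _ = 2 * log n := by rw [log_pow]; norm_num
      _ ≤ 2 * m := by linarith
  have hξm : ξ / m ≤ 6 := by
    rw [div_le_iff₀ hm0]
    linarith
  refine ⟨?_, abs_sub_log_add_log_log_le_of_expSlope_eq hξ0 hslope, ?_⟩
  · refine (abs_sub_exp_div_le_of_sum_Icc_pow_eq hx1 hm hξ0 hsum').trans ?_
    calc exp (ξ / m) * (2 * ξ / m ^ 2)
        ≤ exp 6 * (6 * log (n / m + 1) / m ^ 2) :=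
          mul_le_mul (exp_le_exp.2 hξm) (div_le_div_of_nonneg_right (by linarith) (by positivity))
            (by positivity) (exp_pos _).le
      _ = 6 * exp 6 * (log (n / m + 1) / m ^ 2) := by ring
  · refine (abs_mul_log_sub_le_of_sum_Icc_pow_eq hx1 hm hξ0 hsum').trans ?_
    rw [← mul_div_assoc]
    exact div_le_div_of_nonneg_right (by linarith) hm0.le

theorem isBigO_of_abs_le_mul {α : Type*} {l : Filter α} {f g : α → ℝ} {C : ℝ} (hC : 0 ≤ C)
    (h : ∀ᶠ a in l, |f a| ≤ C * g a) : f =O[l] g :=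
  IsBigO.of_bound C <| h.mono fun a ha => by
    simpa only [norm_eq_abs] using ha.trans (mul_le_mul_of_nonneg_left (le_abs_self _) hC)

open Filter Asymptotics in
/-- asymptotics of the saddle point and of `ξ`.  Assume
`log n ≤ α(n) < n` (for all `n` where this is meaningful, i.e. `n ≥ 2`), and
write `u n = n/α(n)`.  Here `x n = x_{n,α}(1)` is the positive solution of
`∑_{j=1}^{α(n)} x^j = n`, and for `u > 1`, `ξ u` is the nonzero solution of
`exp ξ = 1 + u ξ`.  Then:
(i) `x_{n,α}(1) = exp(ξ(u_n)/α(n)) + O(log(u_n + 1)/α(n)²)`;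
(ii) `ξ(u_n) = log u_n + log log(u_n + 2) + O(log log(u_n + 2)/log(u_n + 2))`;
(iii) `α(n) log x_{n,α}(1) = ξ(u_n) + O(log(u_n + 1)/α(n))`. -/
theorem stmt_19 (α : ℕ → ℕ)
    (hα : ∀ n : ℕ, 2 ≤ n → Real.log n ≤ (α n : ℝ) ∧ α n < n)
    (x : ℕ → ℝ)
    (hx : ∀ n : ℕ, 2 ≤ n → 0 < x n ∧ ∑ j ∈ Finset.Icc 1 (α n), x n ^ j = (n : ℝ))
    (ξ : ℝ → ℝ) (hξ : ∀ u : ℝ, 1 < u → ξ u ≠ 0 ∧ Real.exp (ξ u) = 1 + u * ξ u) :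
    ((fun n : ℕ => x n - Real.exp (ξ ((n : ℝ) / α n) / α n))
      =O[atTop] fun n : ℕ => Real.log ((n : ℝ) / α n + 1) / (α n : ℝ) ^ 2) ∧
    ((fun n : ℕ => ξ ((n : ℝ) / α n) -
        (Real.log ((n : ℝ) / α n) + Real.log (Real.log ((n : ℝ) / α n + 2))))
      =O[atTop] fun n : ℕ =>
        Real.log (Real.log ((n : ℝ) / α n + 2)) / Real.log ((n : ℝ) / α n + 2)) ∧
    ((fun n : ℕ => (α n : ℝ) * Real.log (x n) - ξ ((n : ℝ) / α n))
      =O[atTop] fun n : ℕ => Real.log ((n : ℝ) / α n + 1) / (α n : ℝ)) := by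
  have est (n : ℕ) (hn : 2 ≤ n) :=
    saddle_point_estimates hn (hα n hn).1 (hα n hn).2 (hx n hn).1 (hx n hn).2
      (hξ _ (one_lt_div_of_log_le hn (hα n hn).1 (hα n hn).2))
  refine ⟨?_, ?_, ?_⟩
  · exact isBigO_of_abs_le_mul (by positivity)
      (eventually_atTop.2 ⟨2, fun n hn => (est n hn).1⟩)
  · exact isBigO_of_abs_le_mul (by have := log_pos one_lt_log_three; positivity)
      (eventually_atTop.2 ⟨2, fun n hn => (est n hn).2.1⟩)
  · exact isBigO_of_abs_le_mul (by positivity)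
      (eventually_atTop.2 ⟨2, fun n hn => (est n hn).2.2⟩)
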